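/- arXiv:2409.18549 — 2 statements merged into one kernel-verified Lean document; each statement's English description precedes it below -/
import Mathlib

section
/- Strong duality implies KKT: let K and K' be convex cones in finite-dimensional real inner-product spaces, H a symmetric positive semidefinite linear operator, A a linear operator, and consider the primal problem min_ξ ½⟨Hξ,ξ⟩ + ⟨φ,ξ⟩ subject to Aξ − β ∈ K' and ξ ∈ K, and its dual max_{ζ,λ} ⟨λ,β⟩ − ½⟨Hζ,ζ⟩ subject to Hζ − A*λ + φ ∈ K* and λ ∈ K'*. If ξ₀ is primal feasible, (ζ₀,λ₀) is dual feasible, and the primal and dual objective values at these points coincide (strong duality) with H positive definite, then ξ₀ = ζ₀, and setting λ_ξ := Hξ₀ − A*λ₀ + φ, the complementarity conditions ⟨λ_ξ, ξ₀⟩ = 0 and ⟨λ₀, Aξ₀ − β⟩ = 0 hold, together with the stationarity condition Hξ₀ + φ − A*λ₀ − λ_ξ = 0. -/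
open scoped RealInnerProductSpace

/-- The dual cone of a set in a real inner-product space. -/
def dualConeSet {E : Type*} [NormedAddCommGroup E] [InnerProductSpace ℝ E] (s : Set E) :
    Set E := {y | ∀ x ∈ s, 0 ≤ ⟪x, y⟫}

theorem strong_duality_implies_kkt
    {E F : Type*} [NormedAddCommGroup E] [InnerProductSpace ℝ E] [FiniteDimensional ℝ E]
    [NormedAddCommGroup F] [InnerProductSpace ℝ F] [FiniteDimensional ℝ F]
    (K : Set E) (K' : Set F)
    (hK : Convex ℝ K) (hKcone : ∀ (c : ℝ), 0 ≤ c → ∀ x ∈ K, c • x ∈ K)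
    (hK' : Convex ℝ K') (hK'cone : ∀ (c : ℝ), 0 ≤ c → ∀ y ∈ K', c • y ∈ K')
    (H : E →ₗ[ℝ] E) (A : E →ₗ[ℝ] F) (Astar : F →ₗ[ℝ] E) (φ : E) (β : F)
    (hHsymm : ∀ x y : E, ⟪H x, y⟫ = ⟪H y, x⟫)
    (hHpos : ∀ x : E, x ≠ 0 → 0 < ⟪H x, x⟫)
    (hAstar : ∀ (x : E) (y : F), ⟪A x, y⟫ = ⟪x, Astar y⟫)
    (ξ₀ : E) (ζ₀ : E) (lam₀ : F)
    -- primal feasibility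
    (hprim₁ : A ξ₀ - β ∈ K') (hprim₂ : ξ₀ ∈ K)
    -- dual feasibility
    (hdual₁ : H ζ₀ - Astar lam₀ + φ ∈ dualConeSet K) (hdual₂ : lam₀ ∈ dualConeSet K')
    -- strong duality: equal objective values
    (hstrong : (1 / 2) * ⟪H ξ₀, ξ₀⟫ + ⟪φ, ξ₀⟫ = ⟪lam₀, β⟫ - (1 / 2) * ⟪H ζ₀, ζ₀⟫) :
    ξ₀ = ζ₀ ∧
    ⟪H ξ₀ - Astar lam₀ + φ, ξ₀⟫ = 0 ∧
    ⟪lam₀, A ξ₀ - β⟫ = 0 ∧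
    H ξ₀ + φ - Astar lam₀ - (H ξ₀ - Astar lam₀ + φ) = 0 := by
  have ha : 0 ≤ ⟪ξ₀, H ζ₀ - Astar lam₀ + φ⟫ := hdual₁ ξ₀ hprim₂
  have hb : 0 ≤ ⟪A ξ₀ - β, lam₀⟫ := hdual₂ (A ξ₀ - β) hprim₁
  have hq : 0 ≤ ⟪H (ξ₀ - ζ₀), ξ₀ - ζ₀⟫ := by
    rcases eq_or_ne (ξ₀ - ζ₀) 0 with h | h
    · simp [h]
    · exact le_of_lt (hHpos _ h)
  -- expand everything into base inner products
  have e1 : ⟪ξ₀, H ζ₀ - Astar lam₀ + φ⟫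
      = ⟪H ξ₀, ζ₀⟫ - ⟪A ξ₀, lam₀⟫ + ⟪φ, ξ₀⟫ := by
    rw [inner_add_right, inner_sub_right]
    have c1 : ⟪ξ₀, H ζ₀⟫ = ⟪H ξ₀, ζ₀⟫ := by rw [real_inner_comm]; exact hHsymm ζ₀ ξ₀
    have c2 : ⟪ξ₀, Astar lam₀⟫ = ⟪A ξ₀, lam₀⟫ := (hAstar ξ₀ lam₀).symm
    have c3 : ⟪ξ₀, φ⟫ = ⟪φ, ξ₀⟫ := real_inner_comm _ _
    linarith
  have e2 : ⟪A ξ₀ - β, lam₀⟫ = ⟪A ξ₀, lam₀⟫ - ⟪lam₀, β⟫ := by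
    rw [inner_sub_left, real_inner_comm β lam₀]
  have e3 : ⟪H (ξ₀ - ζ₀), ξ₀ - ζ₀⟫
      = ⟪H ξ₀, ξ₀⟫ - 2 * ⟪H ξ₀, ζ₀⟫ + ⟪H ζ₀, ζ₀⟫ := by
    rw [map_sub, inner_sub_left, inner_sub_right, inner_sub_right, hHsymm ζ₀ ξ₀]
    ring
  have key : ⟪ξ₀, H ζ₀ - Astar lam₀ + φ⟫ + ⟪A ξ₀ - β, lam₀⟫
      + (1 / 2) * ⟪H (ξ₀ - ζ₀), ξ₀ - ζ₀⟫ = 0 := by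
    rw [e1, e2, e3]; linarith
  have hq0 : ⟪H (ξ₀ - ζ₀), ξ₀ - ζ₀⟫ = 0 := by linarith
  have ha0 : ⟪ξ₀, H ζ₀ - Astar lam₀ + φ⟫ = 0 := by linarith
  have hb0 : ⟪A ξ₀ - β, lam₀⟫ = 0 := by linarith
  have hd0 : ξ₀ - ζ₀ = 0 := by
    by_contra h
    exact absurd hq0 (ne_of_gt (hHpos _ h))
  have hξζ : ξ₀ = ζ₀ := sub_eq_zero.mp hd0
  refine ⟨hξζ, ?_, ?_, ?_⟩
  · rw [real_inner_comm, ← hξζ] at ha0; exact ha0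
  · rw [real_inner_comm]; exact hb0
  · abel
end

section
/- The value function of the generalized SOS problem is quasiconvex: define f(ξ) = inf{t ∈ ℝ : tB(ξ) − A(ξ) ∈ Σ and B(ξ) ∈ Σ} (with f(ξ) = +∞ if no such t exists), where A, B : V → W are affine maps and Σ ⊆ W is a convex cone. Then every sublevel set {ξ : f(ξ) ≤ s} is convex, i.e., f is quasiconvex. -/
open scoped Classical

/-- The value function `f(ξ) = inf {t : tB(ξ) − A(ξ) ∈ Σ and B(ξ) ∈ Σ}` (`+∞` if infeasible),
for affine maps `A = A₀ + a`, `B = B₀ + b`. -/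
noncomputable def sosValueFun {V W : Type*} [AddCommGroup V] [Module ℝ V]
    [AddCommGroup W] [Module ℝ W]
    (A₀ B₀ : V →ₗ[ℝ] W) (a b : W) (Sig : Set W) (ξ : V) : EReal :=
  sInf {s : EReal | ∃ t : ℝ, s = (t : EReal) ∧
    t • (B₀ ξ + b) - (A₀ ξ + a) ∈ Sig ∧ B₀ ξ + b ∈ Sig}

theorem sos_value_function_quasiconvex
    {V W : Type*} [AddCommGroup V] [Module ℝ V] [AddCommGroup W] [Module ℝ W]
    (A₀ B₀ : V →ₗ[ℝ] W) (a b : W) (Sig : Set W)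
    (hconv : Convex ℝ Sig)
    (hadd : ∀ x ∈ Sig, ∀ y ∈ Sig, x + y ∈ Sig)
    (hsmul : ∀ (c : ℝ), 0 ≤ c → ∀ x ∈ Sig, c • x ∈ Sig)
    (s : EReal) :
    Convex ℝ {ξ : V | sosValueFun A₀ B₀ a b Sig ξ ≤ s} := by
  intro x hx y hy lam mu hlam hmu hsum
  simp only [Set.mem_setOf_eq] at hx hy ⊢
  obtain rfl : mu = 1 - lam := by linarith
  by_contra h
  push_neg at h
  obtain ⟨r, hsr, hrf⟩ := EReal.lt_iff_exists_real_btwn.mp h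
  have hx' : sosValueFun A₀ B₀ a b Sig x < (r : EReal) := lt_of_le_of_lt hx hsr
  have hy' : sosValueFun A₀ B₀ a b Sig y < (r : EReal) := lt_of_le_of_lt hy hsr
  obtain ⟨u, hu, hult⟩ := sInf_lt_iff.mp hx'
  obtain ⟨t₁, rfl, h1, hB1⟩ := hu
  obtain ⟨v, hv, hvlt⟩ := sInf_lt_iff.mp hy'
  obtain ⟨t₂, rfl, h2, hB2⟩ := hv
  have ht₁r : t₁ < r := by exact_mod_cast hult
  have ht₂r : t₂ < r := by exact_mod_cast hvlt
  set t : ℝ := max t₁ t₂ with ht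
  -- monotone feasibility at x
  have h1' : t • (B₀ x + b) - (A₀ x + a) ∈ Sig := by
    have heq : t • (B₀ x + b) - (A₀ x + a)
        = (t₁ • (B₀ x + b) - (A₀ x + a)) + (t - t₁) • (B₀ x + b) := by
      module
    rw [heq]
    exact hadd _ h1 _ (hsmul _ (sub_nonneg.2 (le_max_left _ _)) _ hB1)
  have h2' : t • (B₀ y + b) - (A₀ y + a) ∈ Sig := by
    have heq : t • (B₀ y + b) - (A₀ y + a)
        = (t₂ • (B₀ y + b) - (A₀ y + a)) + (t - t₂) • (B₀ y + b) := by
      module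
    rw [heq]
    exact hadd _ h2 _ (hsmul _ (sub_nonneg.2 (le_max_right _ _)) _ hB2)
  set z : V := lam • x + (1 - lam) • y with hz
  have hBz : B₀ z + b = lam • (B₀ x + b) + (1 - lam) • (B₀ y + b) := by
    rw [hz, map_add, map_smul, map_smul]
    module
  have hBzmem : B₀ z + b ∈ Sig := by
    rw [hBz]; exact hconv hB1 hB2 hlam hmu hsum
  have hfeas : t • (B₀ z + b) - (A₀ z + a) ∈ Sig := by
    have heq : t • (B₀ z + b) - (A₀ z + a)
        = lam • (t • (B₀ x + b) - (A₀ x + a))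
          + (1 - lam) • (t • (B₀ y + b) - (A₀ y + a)) := by
      rw [hz, map_add, map_smul, map_smul, map_add, map_smul, map_smul]
      module
    rw [heq]
    exact hconv h1' h2' hlam hmu hsum
  have hle : sosValueFun A₀ B₀ a b Sig z ≤ (t : EReal) :=
    sInf_le ⟨t, rfl, hfeas, hBzmem⟩
  have htr : (t : EReal) < (r : EReal) := by
    exact_mod_cast max_lt ht₁r ht₂r
  exact absurd (lt_of_le_of_lt hle htr) (not_lt.2 hrf.le)
end
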